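/- In the matrix-decomposition setting below, the derived subalgebra A^(1) of A (the linear span of all commutators [x,y] = xy − yx, x, y ∈ A) equals L; consequently A^(1) is a perfect Lie algebra and A = A^(1)A^(1) + A^(1), where A^(1)A^(1) denotes the linear span of all products xy with x, y ∈ A^(1). -/

import Mathlib

/-! On a diagonal block, `[X ⊗ a, Y ⊗ b] = [X, Y] ⊗ ab + YX ⊗ (ab - ba)`, and `E₀₀ ⊗ (ab - ba)`
is a combination of commutators of off-diagonal matrix units (for the block `0`, after writing
`a = Σ cd` with `c ∈ Λ(0,i)`, `d ∈ Λ(i,0)` and using associativity); all other commutators of pure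
tensors are off-diagonal. Hence `A⁽¹⁾ ⊆ L`. Conversely every generator of `L` is a sum of
commutators of generators: off-diagonal matrix units are commutators with units `E_ml ⊗ 1_j`, and
trace-zero blocks reduce to `[sl_n, sl_n] = sl_n`, which needs `n ≥ 3` in characteristic `2`.
This gives `L ⊆ A⁽¹⁾⁽¹⁾ ⊆ A⁽¹⁾ ⊆ L`. Finally `E₀₀ ⊗ a = (E₀₁ ⊗ a)(E₁₀ ⊗ 1_i)` and
`1 ⊗ cd = (E₀w ⊗ c)(E_w0 ⊗ d)` give `A = A⁽¹⁾A⁽¹⁾ + A⁽¹⁾`. -/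

open scoped TensorProduct DirectSum

universe u v w

/-- `n` extended to `Î = I ∪ {0}` (`none` playing the role of `0`), with `n_0 = 1`. -/
abbrev nopt {I : Type} (n : I → ℕ) : Option I → ℕ
  | none => 1
  | some i => n i

variable (F : Type u) [Field F] [IsAlgClosed F]
  {I : Type} [Fintype I] [DecidableEq I] [Nonempty I] {n : I → ℕ}
  {Λ : Option I → Option I → Type v}
  [∀ i j, AddCommGroup (Λ i j)] [∀ i j, Module F (Λ i j)]
  {A : Type w} [NonUnitalRing A] [Module F A] [SMulCommClass F A A] [IsScalarTower F A A]

/-- The image in `A` of an element `u ∈ V_ij ⊗ Λ(i,j)` under the identification `ψ`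
of `A` with `⊕_{i,j ∈ Î} V_ij ⊗ Λ(i,j)`. -/
noncomputable def emb (ψ : (⨁ p : Option I × Option I,
      Matrix (Fin (nopt n p.1)) (Fin (nopt n p.2)) F ⊗[F] Λ p.1 p.2) ≃ₗ[F] A)
    (p : Option I × Option I)
    (u : Matrix (Fin (nopt n p.1)) (Fin (nopt n p.2)) F ⊗[F] Λ p.1 p.2) : A :=
  ψ (DirectSum.lof F (Option I × Option I)
    (fun q => Matrix (Fin (nopt n q.1)) (Fin (nopt n q.2)) F ⊗[F] Λ q.1 q.2) p u)

/-- The image in `A` of a pure tensor `X ⊗ a ∈ V_ij ⊗ Λ(i,j)`. -/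
noncomputable def elt (ψ : (⨁ p : Option I × Option I,
      Matrix (Fin (nopt n p.1)) (Fin (nopt n p.2)) F ⊗[F] Λ p.1 p.2) ≃ₗ[F] A)
    (i j : Option I) (X : Matrix (Fin (nopt n i)) (Fin (nopt n j)) F) (a : Λ i j) : A :=
  emb F ψ (i, j) (X ⊗ₜ a)

/-- The union of the subspaces `V'_ij ⊗ Λ(i,j)`, `(i,j) ≠ (0,0)`, where `V'_ii` consists
of the trace-zero matrices and `V'_ij = V_ij` for `i ≠ j`. -/
def lieGens (ψ : (⨁ p : Option I × Option I,
      Matrix (Fin (nopt n p.1)) (Fin (nopt n p.2)) F ⊗[F] Λ p.1 p.2) ≃ₗ[F] A) : Set A :=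
  {x | ∃ (i j : Option I) (X : Matrix (Fin (nopt n i)) (Fin (nopt n j)) F) (a : Λ i j),
      i ≠ j ∧ x = elt F ψ i j X a} ∪
  {x | ∃ (i : I) (X : Matrix (Fin (n i)) (Fin (n i)) F) (a : Λ (some i) (some i)),
      Matrix.trace X = 0 ∧ x = elt F ψ (some i) (some i) X a}

/-- `L`: the Lie subalgebra of `A` (as a subspace closed under commutators) generated by
the subspaces `V'_ij ⊗ Λ(i,j)` over all `(i,j) ≠ (0,0)`. -/
def Lsub (ψ : (⨁ p : Option I × Option I,
      Matrix (Fin (nopt n p.1)) (Fin (nopt n p.2)) F ⊗[F] Λ p.1 p.2) ≃ₗ[F] A) :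
    Submodule F A :=
  sInf {J : Submodule F A | lieGens F ψ ⊆ J ∧ ∀ x ∈ J, ∀ y ∈ J, x * y - y * x ∈ J}

variable (mu : ∀ i j k : Option I, Λ i j →ₗ[F] Λ j k →ₗ[F] Λ i k)
  (ψ : (⨁ p : Option I × Option I,
      Matrix (Fin (nopt n p.1)) (Fin (nopt n p.2)) F ⊗[F] Λ p.1 p.2) ≃ₗ[F] A)

/-- The derived subalgebra `A⁽¹⁾`: the span of all commutators of `A`. -/
def derivedSub : Submodule F A :=
  Submodule.span F {z : A | ∃ x y : A, z = x * y - y * x}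

section TraceZero

open Matrix

variable {K ι : Type*} [Field K] [Fintype ι] [DecidableEq ι]

variable (K ι) in
def traceZeroCommutators : Set (Matrix ι ι K) :=
  {Z | ∃ P Q : Matrix ι ι K, P.trace = 0 ∧ Q.trace = 0 ∧ Z = P * Q - Q * P}

theorem single_sub_single_mem_span_traceZeroCommutators (k l : ι) :
    single k k (1 : K) - single l l 1 ∈ Submodule.span K (traceZeroCommutators K ι) := by
  rcases eq_or_ne k l with rfl | hkl
  · simp
  · refine Submodule.subset_span ⟨single k l 1, single l k 1, trace_single_eq_of_ne _ _ _ hkl,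
      trace_single_eq_of_ne _ _ _ hkl.symm, ?_⟩
    simp

theorem single_mem_span_traceZeroCommutators (h3 : ringChar K = 2 → 3 ≤ Fintype.card ι)
    {k l : ι} (hkl : k ≠ l) :
    single k l (1 : K) ∈ Submodule.span K (traceZeroCommutators K ι) := by
  by_cases hchar : ringChar K = 2
  · -- `E_kl = [E_km, E_ml]` for a third index `m`
    obtain ⟨m, -, hm⟩ := Finset.exists_mem_notMem_of_card_lt_card
      (s := {k, l}) (t := Finset.univ) (by grind [Finset.card_le_two, Finset.card_univ])
    simp only [Finset.mem_insert, Finset.mem_singleton, not_or] at hm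
    refine Submodule.subset_span ⟨single k m 1, single m l 1,
      trace_single_eq_of_ne _ _ _ (Ne.symm hm.1), trace_single_eq_of_ne _ _ _ hm.2, ?_⟩
    simp [hkl.symm]
  · -- `2 E_kl = [E_kk - E_ll, E_kl]`
    have h2 : (2 : K) ≠ 0 := Ring.two_ne_zero hchar
    have hcomm : (2 : K) • single k l 1 ∈ Submodule.span K (traceZeroCommutators K ι) := by
      refine Submodule.subset_span ⟨single k k 1 - single l l 1, single k l 1, by simp,
        trace_single_eq_of_ne _ _ _ hkl, ?_⟩
      simp [sub_mul, mul_sub, hkl.symm, two_smul]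
    simpa [smul_smul, h2] using Submodule.smul_mem _ (2 : K)⁻¹ hcomm

/-- `[sl_ι, sl_ι] = sl_ι`. -/
theorem mem_span_traceZeroCommutators (h3 : ringChar K = 2 → 3 ≤ Fintype.card ι)
    {X : Matrix ι ι K} (hX : X.trace = 0) :
    X ∈ Submodule.span K (traceZeroCommutators K ι) := by
  rcases isEmpty_or_nonempty ι with hι | ⟨⟨z⟩⟩
  · simp [Subsingleton.elim X 0]
  suffices key : ∀ Y : Matrix ι ι K,
      Y - Y.trace • single z z 1 ∈ Submodule.span K (traceZeroCommutators K ι) by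
    simpa [hX] using key X
  intro Y
  induction Y using Matrix.induction_on' with
  | h_zero => simp
  | h_add p q hp hq =>
    convert Submodule.add_mem _ hp hq using 1
    rw [trace_add, add_smul]
    abel
  | h_std_basis k l c =>
    rcases eq_or_ne k l with rfl | hkl
    · simpa [smul_sub] using
        Submodule.smul_mem _ c (single_sub_single_mem_span_traceZeroCommutators (K := K) k z)
    · simpa [trace_single_eq_of_ne _ _ _ hkl] using
        Submodule.smul_mem _ c (single_mem_span_traceZeroCommutators h3 hkl)

theorem fin_one_eq_smul_one (M : Matrix (Fin 1) (Fin 1) K) : M = M 0 0 • 1 := by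
  ext i j
  fin_cases i
  fin_cases j
  simp

theorem fin_one_mul_comm (M N : Matrix (Fin 1) (Fin 1) K) : M * N = N * M := by
  rw [fin_one_eq_smul_one M, fin_one_eq_smul_one N]
  simp [smul_smul, mul_comm]

theorem single_mul_single_eq_one (w : ι) :
    single (0 : Fin 1) w (1 : K) * single w (0 : Fin 1) (1 : K) = 1 := by
  rw [single_mul_single_same, fin_one_eq_smul_one (single _ _ _)]
  simp

end TraceZero

section LieSpan

omit [IsAlgClosed F] [SMulCommClass F A A] [IsScalarTower F A A]

def lieSpan (S : Set A) : Submodule F A :=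
  sInf {J : Submodule F A | S ⊆ J ∧ ∀ x ∈ J, ∀ y ∈ J, x * y - y * x ∈ J}

def commutatorSpan (S T : Set A) : Submodule F A :=
  Submodule.span F {z | ∃ x ∈ S, ∃ y ∈ T, z = x * y - y * x}

variable {F}

theorem subset_lieSpan (S : Set A) : S ⊆ lieSpan F S :=
  fun _ hx => Submodule.mem_sInf.2 fun _ hJ => hJ.1 hx

theorem commutator_mem_lieSpan {S : Set A} {x y : A} (hx : x ∈ lieSpan F S)
    (hy : y ∈ lieSpan F S) : x * y - y * x ∈ lieSpan F S :=
  Submodule.mem_sInf.2 fun J hJ =>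
    hJ.2 x (Submodule.mem_sInf.1 hx J hJ) y (Submodule.mem_sInf.1 hy J hJ)

theorem lieSpan_le {S : Set A} {J : Submodule F A} (hS : S ⊆ J)
    (hJ : ∀ x ∈ J, ∀ y ∈ J, x * y - y * x ∈ J) : lieSpan F S ≤ J :=
  sInf_le ⟨hS, hJ⟩

theorem commutatorSpan_mono {S S' T T' : Set A} (hS : S ⊆ S') (hT : T ⊆ T') :
    commutatorSpan F S T ≤ commutatorSpan F S' T' :=
  Submodule.span_mono fun _ ⟨x, hx, y, hy, hz⟩ => ⟨x, hS hx, y, hT hy, hz⟩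

theorem commutatorSpan_le_derivedSub (S T : Set A) : commutatorSpan F S T ≤ derivedSub F :=
  Submodule.span_mono fun _ ⟨x, _, y, _, hz⟩ => ⟨x, y, hz⟩

theorem derivedSub_eq_lieSpan {S : Set A} (hS : S ⊆ commutatorSpan F S S)
    (hD : derivedSub F (A := A) ≤ lieSpan F S) :
    derivedSub F = lieSpan F S ∧
      commutatorSpan F (derivedSub F (A := A) : Set A) (derivedSub F (A := A)) = derivedSub F := by
  set D : Submodule F A := derivedSub F
  have hD1 : commutatorSpan F D D ≤ D := commutatorSpan_le_derivedSub _ _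
  have hSD : S ⊆ D := hS.trans (commutatorSpan_le_derivedSub S S)
  have hL : lieSpan F S ≤ commutatorSpan F D D :=
    lieSpan_le (hS.trans (commutatorSpan_mono hSD hSD))
      fun x hx y hy => Submodule.subset_span ⟨x, hD1 hx, y, hD1 hy, rfl⟩
  exact ⟨hD.antisymm (hL.trans hD1), hD1.antisymm (hD.trans hL)⟩

end LieSpan

section MatrixDecomposition

omit [IsAlgClosed F] [Fintype I] [Nonempty I] [SMulCommClass F A A] [IsScalarTower F A A]

open Matrix

def IsBlockProduct : Prop :=
  ∀ (i j k : Option I) (X : Matrix (Fin (nopt n i)) (Fin (nopt n j)) F) (a : Λ i j)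
    (Y : Matrix (Fin (nopt n j)) (Fin (nopt n k)) F) (b : Λ j k),
    elt F ψ i j X a * elt F ψ j k Y b = elt F ψ i k (X * Y) (mu i j k a b)

def IsBlockOrthogonal : Prop :=
  ∀ (i j s t : Option I), j ≠ s →
    ∀ (X : Matrix (Fin (nopt n i)) (Fin (nopt n j)) F) (a : Λ i j)
      (Y : Matrix (Fin (nopt n s)) (Fin (nopt n t)) F) (b : Λ s t),
    elt F ψ i j X a * elt F ψ s t Y b = 0

def IsBlockAssoc : Prop :=
  ∀ (i j k l : Option I) (a : Λ i j) (b : Λ j k) (c : Λ k l),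
    mu i k l (mu i j k a b) c = mu i j l a (mu j k l b c)

def IsBlockLeftUnit (one : ∀ i : I, Λ (some i) (some i)) : Prop :=
  ∀ (i : I) (j : Option I) (a : Λ (some i) j), mu (some i) (some i) j (one i) a = a

def IsBlockRightUnit (one : ∀ i : I, Λ (some i) (some i)) : Prop :=
  ∀ (i : I) (j : Option I) (a : Λ j (some i)), mu j (some i) (some i) a (one i) = a

def IsZeroBlockSpanned : Prop :=
  ∀ x : Λ none none, x ∈ Submodule.span F
    {y : Λ none none | ∃ (i : I) (a : Λ none (some i)) (b : Λ (some i) none),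
      y = mu none (some i) none a b}

noncomputable def eltBilin (i j : Option I) :
    Matrix (Fin (nopt n i)) (Fin (nopt n j)) F →ₗ[F] Λ i j →ₗ[F] A :=
  (TensorProduct.mk F _ _).compr₂ (ψ.toLinearMap ∘ₗ DirectSum.lof F (Option I × Option I)
    (fun q => Matrix (Fin (nopt n q.1)) (Fin (nopt n q.2)) F ⊗[F] Λ q.1 q.2) (i, j))

variable {F mu ψ} {one : ∀ i : I, Λ (some i) (some i)} {i j : Option I}

@[simp]
theorem elt_zero_left (a : Λ i j) : elt F ψ i j 0 a = 0 :=
  LinearMap.map_zero₂ (eltBilin F ψ i j) a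

theorem elt_add_left (X Y : Matrix (Fin (nopt n i)) (Fin (nopt n j)) F) (a : Λ i j) :
    elt F ψ i j (X + Y) a = elt F ψ i j X a + elt F ψ i j Y a :=
  LinearMap.map_add₂ (eltBilin F ψ i j) X Y a

theorem elt_sub_left (X Y : Matrix (Fin (nopt n i)) (Fin (nopt n j)) F) (a : Λ i j) :
    elt F ψ i j (X - Y) a = elt F ψ i j X a - elt F ψ i j Y a :=
  LinearMap.map_sub₂ (eltBilin F ψ i j) X Y a

theorem elt_smul_left (c : F) (X : Matrix (Fin (nopt n i)) (Fin (nopt n j)) F) (a : Λ i j) :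
    elt F ψ i j (c • X) a = c • elt F ψ i j X a :=
  LinearMap.map_smul₂ (eltBilin F ψ i j) c X a

theorem elt_sub_right (X : Matrix (Fin (nopt n i)) (Fin (nopt n j)) F) (a b : Λ i j) :
    elt F ψ i j X (a - b) = elt F ψ i j X a - elt F ψ i j X b :=
  map_sub (eltBilin F ψ i j X) a b

theorem elt_mem_of_mem_span_left {M : Submodule F A}
    {T : Set (Matrix (Fin (nopt n i)) (Fin (nopt n j)) F)}
    {X : Matrix (Fin (nopt n i)) (Fin (nopt n j)) F}
    (hX : X ∈ Submodule.span F T) {a : Λ i j} (hT : ∀ Y ∈ T, elt F ψ i j Y a ∈ M) :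
    elt F ψ i j X a ∈ M :=
  (Submodule.span_le (p := M.comap ((eltBilin F ψ i j).flip a))).2 hT hX

theorem elt_mem_of_mem_span_right {M : Submodule F A} {T : Set (Λ i j)} {a : Λ i j}
    (ha : a ∈ Submodule.span F T) {X : Matrix (Fin (nopt n i)) (Fin (nopt n j)) F}
    (hT : ∀ b ∈ T, elt F ψ i j X b ∈ M) : elt F ψ i j X a ∈ M :=
  (Submodule.span_le (p := M.comap (eltBilin F ψ i j X))).2 hT ha

theorem eq_top_of_forall_elt_mem {M : Submodule F A}
    (h : ∀ i j X a, elt F ψ i j X a ∈ M) : M = ⊤ := by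
  refine Submodule.eq_top_iff'.2 fun z => ?_
  obtain ⟨w, rfl⟩ := ψ.surjective z
  induction w using DirectSum.induction_on with
  | zero => simp
  | of p u =>
    induction u using TensorProduct.induction_on with
    | zero => simp
    | tmul X a => exact h p.1 p.2 X a
    | add u v hu hv => simpa using add_mem hu hv
  | add u v hu hv => simpa using add_mem hu hv

theorem commutator_mem_of_forall_elt [SMulCommClass F A A] [IsScalarTower F A A]
    {M : Submodule F A}
    (h : ∀ i j s t X a Y b,
      elt F ψ i j X a * elt F ψ s t Y b - elt F ψ s t Y b * elt F ψ i j X a ∈ M)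
    (x y : A) : x * y - y * x ∈ M := by
  let B : A →ₗ[F] A →ₗ[F] A := LinearMap.mul F A - (LinearMap.mul F A).flip
  have hB : ∀ x y, B x y = x * y - y * x := fun _ _ => rfl
  have hleft : ∀ i j X a, M.comap (B (elt F ψ i j X a)) = ⊤ := fun i j X a =>
    eq_top_of_forall_elt_mem fun s t Y b => by
      rw [Submodule.mem_comap, hB]
      exact h i j s t X a Y b
  have hright : M.comap (B.flip y) = ⊤ := eq_top_of_forall_elt_mem fun i j X a => by
    rw [Submodule.mem_comap, LinearMap.flip_apply, ← Submodule.mem_comap, hleft]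
    exact Submodule.mem_top
  rw [← hB, ← LinearMap.flip_apply (f := B), ← Submodule.mem_comap, hright]
  exact Submodule.mem_top

theorem elt_mem_lieGens_of_ne (hij : i ≠ j) (X : Matrix (Fin (nopt n i)) (Fin (nopt n j)) F)
    (a : Λ i j) : elt F ψ i j X a ∈ lieGens F ψ :=
  Or.inl ⟨i, j, X, a, hij, rfl⟩

theorem elt_mem_lieGens_of_trace_eq_zero {i : I}
    {X : Matrix (Fin (nopt n (some i))) (Fin (nopt n (some i))) F} (hX : X.trace = 0)
    (a : Λ (some i) (some i)) : elt F ψ (some i) (some i) X a ∈ lieGens F ψ :=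
  Or.inr ⟨i, X, a, hX, rfl⟩

theorem elt_mem_Lsub_of_ne (hij : i ≠ j) (X : Matrix (Fin (nopt n i)) (Fin (nopt n j)) F)
    (a : Λ i j) : elt F ψ i j X a ∈ Lsub F ψ :=
  subset_lieSpan _ (elt_mem_lieGens_of_ne hij X a)

theorem elt_mem_Lsub_of_trace_eq_zero {i : I}
    {X : Matrix (Fin (nopt n (some i))) (Fin (nopt n (some i))) F} (hX : X.trace = 0)
    (a : Λ (some i) (some i)) : elt F ψ (some i) (some i) X a ∈ Lsub F ψ :=
  subset_lieSpan _ (elt_mem_lieGens_of_trace_eq_zero hX a)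

theorem commutator_mem_Lsub {x y : A} (hx : x ∈ Lsub F ψ) (hy : y ∈ Lsub F ψ) :
    x * y - y * x ∈ Lsub F ψ :=
  commutator_mem_lieSpan hx hy

theorem elt_mem_of_elt_single_mem {M : Submodule F A} {i : I} {c : Λ (some i) (some i)}
    (hM : ∀ X : Matrix (Fin (nopt n (some i))) (Fin (nopt n (some i))) F,
      X.trace = 0 → elt F ψ (some i) (some i) X c ∈ M)
    {k : Fin (nopt n (some i))} (hk : elt F ψ (some i) (some i) (single k k 1) c ∈ M)
    (Z : Matrix (Fin (nopt n (some i))) (Fin (nopt n (some i))) F) :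
    elt F ψ (some i) (some i) Z c ∈ M := by
  have hZ := hM (Z - Z.trace • single k k 1) (by simp)
  rw [elt_sub_left, elt_smul_left] at hZ
  simpa using add_mem hZ (M.smul_mem Z.trace hk)

theorem elt_commutator_eq (hmul : IsBlockProduct F mu ψ) (hone_left : IsBlockLeftUnit F mu one)
    (hone_right : IsBlockRightUnit F mu one) {i : I}
    (P Q : Matrix (Fin (nopt n (some i))) (Fin (nopt n (some i))) F) (a : Λ (some i) (some i)) :
    elt F ψ (some i) (some i) (P * Q - Q * P) a =
      elt F ψ (some i) (some i) P a * elt F ψ (some i) (some i) Q (one i) -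
        elt F ψ (some i) (some i) Q (one i) * elt F ψ (some i) (some i) P a := by
  rw [hmul, hmul, hone_right, hone_left, elt_sub_left]

theorem elt_mem_commutatorSpan_of_ne (hn2 : ∀ i, 2 ≤ n i) (hmul : IsBlockProduct F mu ψ)
    (hmul0 : IsBlockOrthogonal F ψ) (hone_left : IsBlockLeftUnit F mu one)
    (hone_right : IsBlockRightUnit F mu one) (hij : i ≠ j)
    (X : Matrix (Fin (nopt n i)) (Fin (nopt n j)) F) (a : Λ i j) :
    elt F ψ i j X a ∈ commutatorSpan F (lieGens F ψ) (lieGens F ψ) := by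
  induction X using Matrix.induction_on' with
  | h_zero => simp
  | h_add X Y hX hY => simpa only [elt_add_left] using add_mem hX hY
  | h_std_basis k l c =>
    cases j with
    | some j =>
      have : Nontrivial (Fin (nopt n (some j))) := Fin.nontrivial_iff_two_le.2 (hn2 j)
      obtain ⟨m, hml⟩ := exists_ne l
      -- `E_kl ⊗ a = [E_km ⊗ a, E_ml ⊗ 1_j]`
      refine Submodule.subset_span ⟨_, elt_mem_lieGens_of_ne hij (single k m c) a,
        _, elt_mem_lieGens_of_trace_eq_zero (trace_single_eq_of_ne _ _ (1 : F) hml) (one j), ?_⟩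
      rw [hmul, hone_right, hmul0 _ _ _ _ hij.symm, single_mul_single_same, mul_one, sub_zero]
    | none =>
      cases i with
      | none => exact absurd rfl hij
      | some i =>
        have : Nontrivial (Fin (nopt n (some i))) := Fin.nontrivial_iff_two_le.2 (hn2 i)
        obtain ⟨m, hmk⟩ := exists_ne k
        -- `E_kl ⊗ a = [E_km ⊗ 1_i, E_ml ⊗ a]`
        have hkm := trace_single_eq_of_ne _ _ (1 : F) hmk.symm
        refine Submodule.subset_span ⟨_, elt_mem_lieGens_of_trace_eq_zero hkm (one i),
          _, elt_mem_lieGens_of_ne hij (single m l c) a, ?_⟩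
        rw [hmul, hone_left, hmul0 _ _ _ _ hij.symm, single_mul_single_same, one_mul, sub_zero]

theorem elt_mem_commutatorSpan_of_trace_eq_zero {i : I} (hn3 : ringChar F = 2 → 3 ≤ n i)
    (hmul : IsBlockProduct F mu ψ) (hone_left : IsBlockLeftUnit F mu one)
    (hone_right : IsBlockRightUnit F mu one)
    {X : Matrix (Fin (nopt n (some i))) (Fin (nopt n (some i))) F} (hX : X.trace = 0)
    (a : Λ (some i) (some i)) :
    elt F ψ (some i) (some i) X a ∈ commutatorSpan F (lieGens F ψ) (lieGens F ψ) := by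
  refine elt_mem_of_mem_span_left (mem_span_traceZeroCommutators (by simpa using hn3) hX) ?_
  rintro _ ⟨P, Q, hP, hQ, rfl⟩
  rw [elt_commutator_eq hmul hone_left hone_right]
  exact Submodule.subset_span ⟨_, elt_mem_lieGens_of_trace_eq_zero hP a,
    _, elt_mem_lieGens_of_trace_eq_zero hQ (one i), rfl⟩

theorem lieGens_subset_commutatorSpan (hn2 : ∀ i, 2 ≤ n i)
    (hn3 : ringChar F = 2 → ∀ i, 3 ≤ n i) (hmul : IsBlockProduct F mu ψ)
    (hmul0 : IsBlockOrthogonal F ψ) (hone_left : IsBlockLeftUnit F mu one)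
    (hone_right : IsBlockRightUnit F mu one) :
    lieGens F ψ ⊆ commutatorSpan F (lieGens F ψ) (lieGens F ψ) := by
  rintro _ (⟨i, j, X, a, hij, rfl⟩ | ⟨i, X, a, hX, rfl⟩)
  · exact elt_mem_commutatorSpan_of_ne hn2 hmul hmul0 hone_left hone_right hij X a
  · exact elt_mem_commutatorSpan_of_trace_eq_zero (fun h => hn3 h i) hmul hone_left hone_right
      hX a

theorem elt_some_mul_sub_mul_mem_Lsub {i : I} (hn2 : 2 ≤ n i) (hmul : IsBlockProduct F mu ψ)
    (a b : Λ (some i) (some i)) (Z : Matrix (Fin (nopt n (some i))) (Fin (nopt n (some i))) F) :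
    elt F ψ (some i) (some i) Z (mu _ _ _ a b - mu _ _ _ b a) ∈ Lsub F ψ := by
  have : Nontrivial (Fin (nopt n (some i))) := Fin.nontrivial_iff_two_le.2 hn2
  obtain ⟨k, l, hkl⟩ := exists_pair_ne (Fin (nopt n (some i)))
  refine elt_mem_of_elt_single_mem (fun X hX => elt_mem_Lsub_of_trace_eq_zero hX _) (k := k) ?_ Z
  -- `E_kk ⊗ (ab - ba) = [E_kl ⊗ a, E_lk ⊗ b] + (E_ll - E_kk) ⊗ ba`
  have hbracket := commutator_mem_Lsub (ψ := ψ)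
    (elt_mem_Lsub_of_trace_eq_zero (trace_single_eq_of_ne _ _ (1 : F) hkl) a)
    (elt_mem_Lsub_of_trace_eq_zero (trace_single_eq_of_ne _ _ (1 : F) hkl.symm) b)
  have hdiag := elt_mem_Lsub_of_trace_eq_zero (ψ := ψ) (X := single l l 1 - single k k 1)
    (by simp) (mu _ _ _ b a)
  convert add_mem hbracket hdiag using 1
  rw [hmul, hmul, single_mul_single_same, single_mul_single_same, elt_sub_left, elt_sub_right,
    one_mul]
  abel

theorem elt_none_mul_sub_mul_mem_Lsub (hpos : ∀ i, 0 < n i) (hassoc : IsBlockAssoc F mu)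
    (h00 : IsZeroBlockSpanned F mu) (hmul : IsBlockProduct F mu ψ) (a b : Λ none none)
    (Z : Matrix (Fin 1) (Fin 1) F) :
    elt F ψ none none Z (mu _ _ _ a b - mu _ _ _ b a) ∈ Lsub F ψ := by
  rw [fin_one_eq_smul_one Z, elt_smul_left]
  refine Submodule.smul_mem _ _ ?_
  let f : Λ none none →ₗ[F] A :=
    eltBilin F ψ none none 1 ∘ₗ ((mu none none none).flip b - mu none none none b)
  change a ∈ (Lsub F ψ).comap f
  refine (Submodule.span_le.2 ?_) (h00 a)
  rintro _ ⟨i, c, d, rfl⟩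
  show elt F ψ none none 1 (mu _ _ _ (mu _ _ _ c d) b - mu _ _ _ b (mu _ _ _ c d)) ∈ Lsub F ψ
  obtain ⟨w⟩ : Nonempty (Fin (nopt n (some i))) := ⟨⟨0, hpos i⟩⟩
  have hi0 : some i ≠ none := Option.some_ne_none i
  -- `1 ⊗ (cd·b - b·cd) = [E₀w ⊗ c, E_w0 ⊗ db] - [E₀w ⊗ bc, E_w0 ⊗ d]`: the `E_ww` terms cancel
  -- by associativity
  have h1 := commutator_mem_Lsub (ψ := ψ)
    (elt_mem_Lsub_of_ne hi0.symm (single (0 : Fin 1) w (1 : F)) c)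
    (elt_mem_Lsub_of_ne hi0 (single w (0 : Fin 1) (1 : F)) (mu _ _ _ d b))
  have h2 := commutator_mem_Lsub (ψ := ψ)
    (elt_mem_Lsub_of_ne hi0.symm (single (0 : Fin 1) w (1 : F)) (mu _ _ _ b c))
    (elt_mem_Lsub_of_ne hi0 (single w (0 : Fin 1) (1 : F)) d)
  convert sub_mem h1 h2 using 1
  rw [hmul, hmul, hmul, hmul, single_mul_single_eq_one, hassoc none (some i) none none c d b,
    ← hassoc none none (some i) none b c d, hassoc (some i) none none (some i) d b c,
    elt_sub_right]
  abel

theorem elt_mul_sub_mul_mem_Lsub (hn2 : ∀ i, 2 ≤ n i) (hassoc : IsBlockAssoc F mu)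
    (h00 : IsZeroBlockSpanned F mu) (hmul : IsBlockProduct F mu ψ) (a b : Λ i i)
    (Z : Matrix (Fin (nopt n i)) (Fin (nopt n i)) F) :
    elt F ψ i i Z (mu _ _ _ a b - mu _ _ _ b a) ∈ Lsub F ψ := by
  cases i with
  | none =>
    exact elt_none_mul_sub_mul_mem_Lsub (fun i => two_pos.trans_le (hn2 i)) hassoc h00 hmul a b Z
  | some i => exact elt_some_mul_sub_mul_mem_Lsub (hn2 i) hmul a b Z

theorem commutator_elt_mem_Lsub (hn2 : ∀ i, 2 ≤ n i) (hassoc : IsBlockAssoc F mu)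
    (h00 : IsZeroBlockSpanned F mu) (hmul : IsBlockProduct F mu ψ)
    (hmul0 : IsBlockOrthogonal F ψ) {s t : Option I}
    (X : Matrix (Fin (nopt n i)) (Fin (nopt n j)) F) (a : Λ i j)
    (Y : Matrix (Fin (nopt n s)) (Fin (nopt n t)) F) (b : Λ s t) :
    elt F ψ i j X a * elt F ψ s t Y b - elt F ψ s t Y b * elt F ψ i j X a ∈ Lsub F ψ := by
  by_cases hjs : j = s <;> by_cases hti : t = i
  · subst hjs hti
    by_cases hij : t = j
    · subst hij
      have hsplit : elt F ψ t t X a * elt F ψ t t Y b - elt F ψ t t Y b * elt F ψ t t X a =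
          elt F ψ t t (X * Y - Y * X) (mu _ _ _ a b) +
            elt F ψ t t (Y * X) (mu _ _ _ a b - mu _ _ _ b a) := by
        rw [hmul, hmul, elt_sub_left, elt_sub_right]
        abel
      rw [hsplit]
      refine add_mem ?_ (elt_mul_sub_mul_mem_Lsub hn2 hassoc h00 hmul a b _)
      cases t with
      | none => simp [fin_one_mul_comm X Y]
      | some t =>
        exact elt_mem_Lsub_of_trace_eq_zero (by rw [trace_sub, trace_mul_comm, sub_self]) _
    · exact commutator_mem_Lsub (elt_mem_Lsub_of_ne hij X a) (elt_mem_Lsub_of_ne (Ne.symm hij) Y b)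
  · subst hjs
    rw [hmul, hmul0 _ _ _ _ hti, sub_zero]
    exact elt_mem_Lsub_of_ne (Ne.symm hti) _ _
  · subst hti
    rw [hmul0 _ _ _ _ hjs, hmul, zero_sub]
    exact neg_mem (elt_mem_Lsub_of_ne (Ne.symm hjs) _ _)
  · rw [hmul0 _ _ _ _ hjs, hmul0 _ _ _ _ hti, sub_zero]
    exact zero_mem _

theorem derivedSub_le_Lsub [SMulCommClass F A A] [IsScalarTower F A A] (hn2 : ∀ i, 2 ≤ n i)
    (hassoc : IsBlockAssoc F mu) (h00 : IsZeroBlockSpanned F mu)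
    (hmul : IsBlockProduct F mu ψ) (hmul0 : IsBlockOrthogonal F ψ) :
    derivedSub F ≤ Lsub F ψ :=
  Submodule.span_le.2 fun _ ⟨x, y, hz⟩ => hz ▸ commutator_mem_of_forall_elt
    (fun _ _ _ _ X a Y b => commutator_elt_mem_Lsub hn2 hassoc h00 hmul hmul0 X a Y b) x y

theorem span_mul_sup_Lsub_eq_top (hn2 : ∀ i, 2 ≤ n i) (h00 : IsZeroBlockSpanned F mu)
    (hmul : IsBlockProduct F mu ψ) (hone_right : IsBlockRightUnit F mu one) :
    Submodule.span F {z | ∃ x ∈ Lsub F ψ, ∃ y ∈ Lsub F ψ, z = x * y} ⊔ Lsub F ψ = ⊤ := by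
  have hprod : ∀ x ∈ Lsub F ψ, ∀ y ∈ Lsub F ψ,
      x * y ∈ Submodule.span F {z | ∃ x ∈ Lsub F ψ, ∃ y ∈ Lsub F ψ, z = x * y} ⊔ Lsub F ψ :=
    fun x hx y hy => Submodule.mem_sup_left (Submodule.subset_span ⟨x, hx, y, hy, rfl⟩)
  refine eq_top_of_forall_elt_mem (ψ := ψ) fun i j X a => ?_
  by_cases hij : i = j
  · subst hij
    cases i with
    | none =>
      rw [fin_one_eq_smul_one X, elt_smul_left]
      refine Submodule.smul_mem _ _ (elt_mem_of_mem_span_right (h00 a) ?_)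
      rintro _ ⟨i, c, d, rfl⟩
      obtain ⟨w⟩ : Nonempty (Fin (nopt n (some i))) := ⟨⟨0, two_pos.trans_le (hn2 i)⟩⟩
      have hi0 : some i ≠ none := Option.some_ne_none i
      -- `1 ⊗ cd = (E₀w ⊗ c)(E_w0 ⊗ d)`
      have := hprod _ (elt_mem_Lsub_of_ne hi0.symm (single (0 : Fin 1) w (1 : F)) c)
        _ (elt_mem_Lsub_of_ne hi0 (single w (0 : Fin 1) (1 : F)) d)
      rwa [hmul, single_mul_single_eq_one] at this
    | some i =>
      have : Nontrivial (Fin (nopt n (some i))) := Fin.nontrivial_iff_two_le.2 (hn2 i)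
      obtain ⟨k, l, hkl⟩ := exists_pair_ne (Fin (nopt n (some i)))
      refine elt_mem_of_elt_single_mem
        (fun Y hY => Submodule.mem_sup_right (elt_mem_Lsub_of_trace_eq_zero hY a)) (k := k) ?_ X
      -- `E_kk ⊗ a = (E_kl ⊗ a)(E_lk ⊗ 1_i)`
      have := hprod _ (elt_mem_Lsub_of_trace_eq_zero (trace_single_eq_of_ne _ _ (1 : F) hkl) a)
        _ (elt_mem_Lsub_of_trace_eq_zero (trace_single_eq_of_ne _ _ (1 : F) hkl.symm) (one i))
      rwa [hmul, single_mul_single_same, mul_one, hone_right] at this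
  · exact Submodule.mem_sup_right (elt_mem_Lsub_of_ne hij X a)

end MatrixDecomposition

theorem derived_eq_Lsub
    -- sizes: `n_i ≥ 2`, and `n_i ≥ 3` in characteristic 2
    (hn2 : ∀ i : I, 2 ≤ n i) (hn3 : ringChar F = 2 → ∀ i : I, 3 ≤ n i)
    -- `Λ` is an associative algebra with componentwise products `Λ(i,j)Λ(j,k) ⊆ Λ(i,k)`
    (hassoc : ∀ (i j k l : Option I) (a : Λ i j) (b : Λ j k) (c : Λ k l),
      mu i k l (mu i j k a b) c = mu i j l a (mu j k l b c))
    -- each `Λ(i,i)`, `i ∈ I`, has an identity element `1_i`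
    (one : ∀ i : I, Λ (some i) (some i))
    (hone_left : ∀ (i : I) (j : Option I) (a : Λ (some i) j),
      mu (some i) (some i) j (one i) a = a)
    (hone_right : ∀ (i : I) (j : Option I) (a : Λ j (some i)),
      mu j (some i) (some i) a (one i) = a)
    -- `Λ(0,0) = Σ_{i ∈ I} Λ(0,i)Λ(i,0)`
    (h00 : ∀ x : Λ none none, x ∈ Submodule.span F
      {y : Λ none none | ∃ (i : I) (a : Λ none (some i)) (b : Λ (some i) none),
        y = mu none (some i) none a b})
    -- the product of `A`: `(X ⊗ λ)(Y ⊗ μ) = XY ⊗ λμ` for matching inner indices …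
    (hmul : ∀ (i j k : Option I) (X : Matrix (Fin (nopt n i)) (Fin (nopt n j)) F)
      (a : Λ i j) (Y : Matrix (Fin (nopt n j)) (Fin (nopt n k)) F) (b : Λ j k),
      elt F ψ i j X a * elt F ψ j k Y b = elt F ψ i k (X * Y) (mu i j k a b))
    -- … and `0` otherwise
    (hmul0 : ∀ (i j s t : Option I), j ≠ s →
      ∀ (X : Matrix (Fin (nopt n i)) (Fin (nopt n j)) F) (a : Λ i j)
        (Y : Matrix (Fin (nopt n s)) (Fin (nopt n t)) F) (b : Λ s t),
      elt F ψ i j X a * elt F ψ s t Y b = 0)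
    :
    -- `A⁽¹⁾ = L`; consequently `A⁽¹⁾` is perfect and `A = A⁽¹⁾A⁽¹⁾ + A⁽¹⁾`
    derivedSub F (A := A) = Lsub F ψ ∧
    Submodule.span F {z : A | ∃ x ∈ derivedSub F (A := A), ∃ y ∈ derivedSub F (A := A),
        z = x * y - y * x} = derivedSub F (A := A) ∧
    Submodule.span F {z : A | ∃ x ∈ derivedSub F (A := A), ∃ y ∈ derivedSub F (A := A),
        z = x * y} ⊔ derivedSub F (A := A) = (⊤ : Submodule F A) := by
  obtain ⟨hDL, hperfect⟩ := derivedSub_eq_lieSpan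
    (lieGens_subset_commutatorSpan hn2 hn3 hmul hmul0 hone_left hone_right)
    (derivedSub_le_Lsub hn2 hassoc h00 hmul hmul0)
  refine ⟨hDL, hperfect, ?_⟩
  rw [hDL]
  exact span_mul_sup_Lsub_eq_top hn2 h00 hmul hone_right
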